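/- Local atomic pairing estimate against L^{(q,p,η)loc}_{r',φ_1,δ}: let 0<q≤1, 0<p<∞, 0<η<∞, let 1<r≤∞ with conjugate exponent r', let δ ≥ ⌊d(1/q−1)⌋ be an integer, and fix K ≥ 1, C_0 > 1. Let g ∈ L^{(q,p,η)loc}_{r',φ_1,δ}. Let {Ω^j}_{j∈ℤ} be open proper subsets of ℝ^d with ‖∑_{j∈ℤ} 2^{jη} χ_{Ω^j}‖_{q/η,p/η} < ∞; for each j, let {Q^{j,k}}_{k≥0} be cubes with Q^{j,k} ⊂ Ω^j for all k and ∑_{k≥0} χ_{Q^{j,k}} ≤ K, and let a_{j,k} be a local (q,r,δ)-atom with associated cube Q̃^{j,k} := C_0 Q^{j,k}. Then ∑_{j∈ℤ} ∑_{k≥0} 2^j |Q̃^{j,k}|^{1/q} |∫_{ℝ^d} g(x) a_{j,k}(x) dx| ≤ 2 ‖g‖_{L^{(q,p,η)loc}_{r',φ_1,δ}} ‖∑_{j∈ℤ} 2^{jη} χ_{Ω^j}‖_{q/η,p/η}^{1/η}. -/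

import Mathlib

open MeasureTheory ENNReal Set
open scoped Classical

noncomputable section

namespace HA

/-- `ℝ^d` with the Euclidean metric. -/
abbrev Ed (d : ℕ) : Type := EuclideanSpace ℝ (Fin d)

/-- The unit cube `k + [0,1)^d`. -/
def unitCube (d : ℕ) (k : Fin d → ℤ) : Set (Ed d) :=
  {x | ∀ i, (k i : ℝ) ≤ x i ∧ x i < (k i : ℝ) + 1}

/-- Closed axis-parallel cube with center `c` and side-length `ℓ`. -/
def cube (d : ℕ) (c : Ed d) (ℓ : ℝ) : Set (Ed d) :=
  {x | ∀ i, |x i - c i| ≤ ℓ / 2}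

/-- Open axis-parallel cube with center `c` and side-length `ℓ`. -/
def openCube (d : ℕ) (c : Ed d) (ℓ : ℝ) : Set (Ed d) :=
  {x | ∀ i, |x i - c i| < ℓ / 2}

/-- The Wiener amalgam quasi-norm `‖F‖_{q,p}` of an `ℝ≥0∞`-valued function:
`(∑_{k ∈ ℤ^d} (∫_{Q_k} F^q)^{p/q})^{1/p}`. -/
def eAmalgam (d : ℕ) (q p : ℝ) (F : Ed d → ℝ≥0∞) : ℝ≥0∞ :=
  (∑' k : Fin d → ℤ, ((∫⁻ x in unitCube d k, F x ^ q) ^ (1 / q)) ^ p) ^ (1 / p)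

/-- The Wiener amalgam quasi-norm `‖f‖_{q,p}` of a complex-valued function. -/
def amalgamNorm (d : ℕ) (q p : ℝ) (f : Ed d → ℂ) : ℝ≥0∞ :=
  eAmalgam d q p fun x => (‖f x‖₊ : ℝ≥0∞)

/-- The Hardy–Littlewood maximal function `𝔐 f`. -/
def maximalFn (d : ℕ) (f : Ed d → ℂ) (x : Ed d) : ℝ≥0∞ :=
  ⨆ (r : ℝ) (_ : 0 < r),
    (volume (Metric.ball x r))⁻¹ * ∫⁻ y in Metric.ball x r, (‖f y‖₊ : ℝ≥0∞)

/-- The `ℓ^u` norm of a sequence in `ℝ≥0∞`; for `u = ∞` it is the supremum. -/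
def ellU (u : ℝ≥0∞) (F : ℕ → ℝ≥0∞) : ℝ≥0∞ :=
  if u = ∞ then ⨆ n, F n else (∑' n, F n ^ u.toReal) ^ (1 / u.toReal)

/-- Polynomial functions on `ℝ^d` (complex valued) of degree at most `δ`. -/
def polySpace (d δ : ℕ) : Set (Ed d → ℂ) :=
  {g | ∃ P : MvPolynomial (Fin d) ℂ, P.totalDegree ≤ δ ∧
        ∀ x : Ed d, g x = MvPolynomial.eval (fun i => (x i : ℂ)) P}

/-- `P` is a polynomial of degree at most `δ` with `∫_Q (f - P) 𝔮 = 0`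
for every polynomial `𝔮` of degree at most `δ`. -/
def projCond (d δ : ℕ) (Q : Set (Ed d)) (f P : Ed d → ℂ) : Prop :=
  P ∈ polySpace d δ ∧ ∀ 𝔮 ∈ polySpace d δ, ∫ x in Q, (f x - P x) * 𝔮 x = 0

/-- The polynomial projection `P_Q^δ(f)` (defaulting to `0` when it does not exist). -/
def polyProj (d δ : ℕ) (Q : Set (Ed d)) (f : Ed d → ℂ) : Ed d → ℂ :=
  if h : ∃ P, projCond d δ Q f P then h.choose else 0

/-- Membership in `L^r_loc(ℝ^d)`. -/
def memLocLr (d : ℕ) (r : ℝ) (f : Ed d → ℂ) : Prop :=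
  AEStronglyMeasurable f volume ∧
    ∀ (c : Ed d) (ℓ : ℝ), 0 < ℓ → (∫⁻ x in cube d c ℓ, (‖f x‖₊ : ℝ≥0∞) ^ r) ≠ ∞

/-- A countable family of (nondegenerate) cubes contained in `Ω` with overlap at most `K`. -/
structure CubeFamily (d : ℕ) (K : ℝ) (Ω : Set (Ed d)) where
  center : ℕ → Ed d
  side : ℕ → ℝ
  side_pos : ∀ n, 0 < side n
  cube_subset : ∀ n, cube d (center n) (side n) ⊆ Ω
  overlap : ∀ x, (∑' n, (cube d (center n) (side n)).indicator (fun _ => (1 : ℝ≥0∞)) x)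
      ≤ ENNReal.ofReal K

/-- `|Q|^{1/r'} (∫_Q |g - P_Q^δ(g)|^r)^{1/r}` (note `1/r' = 1 - 1/r`). -/
def oscTerm (d δ : ℕ) (r : ℝ) (g : Ed d → ℂ) (Q : Set (Ed d)) : ℝ≥0∞ :=
  volume Q ^ (1 - 1 / r) * (∫⁻ x in Q, (‖g x - polyProj d δ Q g x‖₊ : ℝ≥0∞) ^ r) ^ (1 / r)

/-- `|Q|^{1/r'} (∫_Q |g|^r)^{1/r}`. -/
def intTerm (d : ℕ) (r : ℝ) (g : Ed d → ℂ) (Q : Set (Ed d)) : ℝ≥0∞ :=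
  volume Q ^ (1 - 1 / r) * (∫⁻ x in Q, (‖g x‖₊ : ℝ≥0∞) ^ r) ^ (1 / r)

/-- `inf_{𝔭 ∈ 𝒫_δ} |Q|^{1/r'} (∫_Q |g - 𝔭|^r)^{1/r}`. -/
def bestTerm (d δ : ℕ) (r : ℝ) (g : Ed d → ℂ) (Q : Set (Ed d)) : ℝ≥0∞ :=
  ⨅ P ∈ polySpace d δ,
    volume Q ^ (1 - 1 / r) * (∫⁻ x in Q, (‖g x - P x‖₊ : ℝ≥0∞) ^ r) ^ (1 / r)

/-- The functional `O(g, Ω, r)`. -/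
def Ofun (d δ : ℕ) (K C0 r : ℝ) (g : Ed d → ℂ) (Ω : Set (Ed d)) : ℝ≥0∞ :=
  ⨆ F : CubeFamily d K Ω, ∑' n, oscTerm d δ r g (cube d (F.center n) (C0 * F.side n))

/-- The functional `Õ(g, Ω, r)`. -/
def Otilde (d δ : ℕ) (K C0 r : ℝ) (g : Ed d → ℂ) (Ω : Set (Ed d)) : ℝ≥0∞ :=
  ⨆ F : CubeFamily d K Ω, ∑' n, bestTerm d δ r g (cube d (F.center n) (C0 * F.side n))

/-- The local functional `O(g, Ω, r)^{loc}`. -/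
def OfunLoc (d δ : ℕ) (K C0 r : ℝ) (g : Ed d → ℂ) (Ω : Set (Ed d)) : ℝ≥0∞ :=
  ⨆ F : CubeFamily d K Ω, ∑' n,
    if volume (cube d (F.center n) (C0 * F.side n)) < 1
    then oscTerm d δ r g (cube d (F.center n) (C0 * F.side n))
    else intTerm d r g (cube d (F.center n) (C0 * F.side n))

/-- `φ₁(Q) = ‖χ_Q‖_{q,p} / |Q|`. -/
def φ1 (d : ℕ) (q p : ℝ) (c : Ed d) (ℓ : ℝ) : ℝ≥0∞ :=
  eAmalgam d q p ((cube d c ℓ).indicator fun _ => (1 : ℝ≥0∞)) * (volume (cube d c ℓ))⁻¹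

/-- `φ₂(Q) = ‖χ_Q‖_{L^q} / |Q| = |Q|^{1/q} / |Q|`. -/
def φ2 (d : ℕ) (q : ℝ) (c : Ed d) (ℓ : ℝ) : ℝ≥0∞ :=
  volume (cube d c ℓ) ^ (1 / q) * (volume (cube d c ℓ))⁻¹

/-- The Campanato norm `‖f‖_{𝓛_{r,φ,δ}}`. -/
def campanato (d δ : ℕ) (r : ℝ) (φ : Ed d → ℝ → ℝ≥0∞) (f : Ed d → ℂ) : ℝ≥0∞ :=
  ⨆ (c : Ed d) (ℓ : ℝ) (_ : 0 < ℓ),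
    (φ c ℓ)⁻¹ * ((volume (cube d c ℓ))⁻¹ *
      ∫⁻ x in cube d c ℓ, (‖f x - polyProj d δ (cube d c ℓ) f x‖₊ : ℝ≥0∞) ^ r) ^ (1 / r)

/-- The local Campanato norm `‖f‖_{𝓛^{loc}_{r,φ,δ}}`. -/
def campanatoLoc (d δ : ℕ) (r : ℝ) (φ : Ed d → ℝ → ℝ≥0∞) (f : Ed d → ℂ) : ℝ≥0∞ :=
  (⨆ (c : Ed d) (ℓ : ℝ) (_ : 0 < ℓ) (_ : 1 ≤ volume (cube d c ℓ)),
    (φ c ℓ)⁻¹ * ((volume (cube d c ℓ))⁻¹ *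
      ∫⁻ x in cube d c ℓ, (‖f x‖₊ : ℝ≥0∞) ^ r) ^ (1 / r)) +
  (⨆ (c : Ed d) (ℓ : ℝ) (_ : 0 < ℓ) (_ : volume (cube d c ℓ) < 1),
    (φ c ℓ)⁻¹ * ((volume (cube d c ℓ))⁻¹ *
      ∫⁻ x in cube d c ℓ, (‖f x - polyProj d δ (cube d c ℓ) f x‖₊ : ℝ≥0∞) ^ r) ^ (1 / r))

/-- `‖∑_{j ∈ ℤ} 2^{jη} χ_{Ω^j}‖_{q/η, p/η}`. -/
def layerNorm (d : ℕ) (q p η : ℝ) (Ω : ℤ → Set (Ed d)) : ℝ≥0∞ :=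
  eAmalgam d (q / η) (p / η) fun x =>
    ∑' j : ℤ, (Ω j).indicator (fun _ => (2 : ℝ≥0∞) ^ ((j : ℝ) * η)) x

/-- The set of admissible constants in the defining inequality of `𝓛^{(q,p,η)}_{r,φ₁,δ}`. -/
def ONormSet (d δ : ℕ) (K C0 q p η r : ℝ) (g : Ed d → ℂ) : Set ℝ≥0∞ :=
  {C | ∀ Ω : ℤ → Set (Ed d), (∀ j, IsOpen (Ω j)) → (∀ j, Ω j ≠ univ) →
    layerNorm d q p η Ω ≠ ∞ →
    (∑' j : ℤ, (2 : ℝ≥0∞) ^ (j : ℝ) * Ofun d δ K C0 r g (Ω j)) ≤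
      C * layerNorm d q p η Ω ^ (1 / η)}

/-- The variant of `ONormSet` defined through the functional `Õ`. -/
def OtildeNormSet (d δ : ℕ) (K C0 q p η r : ℝ) (g : Ed d → ℂ) : Set ℝ≥0∞ :=
  {C | ∀ Ω : ℤ → Set (Ed d), (∀ j, IsOpen (Ω j)) → (∀ j, Ω j ≠ univ) →
    layerNorm d q p η Ω ≠ ∞ →
    (∑' j : ℤ, (2 : ℝ≥0∞) ^ (j : ℝ) * Otilde d δ K C0 r g (Ω j)) ≤
      C * layerNorm d q p η Ω ^ (1 / η)}

/-- The set of admissible constants in the defining inequality of `𝓛^{(q,p,η)loc}_{r,φ₁,δ}`. -/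
def ONormSetLoc (d δ : ℕ) (K C0 q p η r : ℝ) (g : Ed d → ℂ) : Set ℝ≥0∞ :=
  {C | ∀ Ω : ℤ → Set (Ed d), (∀ j, IsOpen (Ω j)) → (∀ j, Ω j ≠ univ) →
    layerNorm d q p η Ω ≠ ∞ →
    (∑' j : ℤ, (2 : ℝ≥0∞) ^ (j : ℝ) * OfunLoc d δ K C0 r g (Ω j)) ≤
      C * layerNorm d q p η Ω ^ (1 / η)}

/-- A `(q,r,s)`-atom with associated cube `Q`. -/
def IsHAtom (d : ℕ) (q : ℝ) (r : ℝ≥0∞) (s : ℕ) (a : Ed d → ℂ) (Q : Set (Ed d)) : Prop :=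
  (∀ x ∉ Q, a x = 0) ∧
  eLpNorm a r volume ≤ volume Q ^ (1 / r.toReal - 1 / q) ∧
  (∀ β : Fin d → ℕ, (∑ i, β i) ≤ s → ∫ x, (∏ i, (x i : ℂ) ^ β i) * a x = 0)

/-- A local `(q,r,s)`-atom with associated cube `Q`: vanishing moments are required
only when `|Q| < 1`. -/
def IsLocalHAtom (d : ℕ) (q : ℝ) (r : ℝ≥0∞) (s : ℕ) (a : Ed d → ℂ) (Q : Set (Ed d)) : Prop :=
  (∀ x ∉ Q, a x = 0) ∧
  eLpNorm a r volume ≤ volume Q ^ (1 / r.toReal - 1 / q) ∧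
  (volume Q < 1 → ∀ β : Fin d → ℕ, (∑ i, β i) ≤ s → ∫ x, (∏ i, (x i : ℂ) ^ β i) * a x = 0)

/-! Hölder's inequality on the cube `Q̃` of an atom, combined with the size condition
`‖a‖_r ≤ |Q̃|^{1/r - 1/q}`, gives `|Q̃|^{1/q} |∫ g a| ≤ |Q̃|^{1/r'} ‖g‖_{L^{r'}(Q̃)}`; when `|Q̃| < 1`
the vanishing moments let us replace `g` by `g - P_{Q̃}^δ(g)` first. So for fixed `j` the sum
over `k` is one of the sums whose supremum is `O(g, Ω^j, r')^{loc}`, and the defining inequality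
of `L^{(q,p,η)loc}_{r',φ₁,δ}` bounds the sum over `j` by `C ‖∑_j 2^{jη} χ_{Ω^j}‖^{1/η}_{q/η,p/η}`
for every admissible constant `C`, hence for their infimum. -/

section Holder

variable {α : Type*} [MeasurableSpace α] {μ : Measure α} {Q : Set α} {s r : ℝ≥0∞}
  [ENNReal.HolderConjugate s r] {f a : α → ℂ}

theorem enorm_integral_mul_le_eLpNorm_restrict_mul (hQ : MeasurableSet Q)
    (hsupp : ∀ x ∉ Q, a x = 0) (hf : AEStronglyMeasurable f μ) (ha : AEStronglyMeasurable a μ) :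
    ‖∫ x, f x * a x ∂μ‖ₑ ≤ eLpNorm f s (μ.restrict Q) * eLpNorm a r μ := by
  have hsupp' : ∀ x ∉ Q, f x * a x = 0 := fun x hx => by rw [hsupp x hx, mul_zero]
  calc ‖∫ x, f x * a x ∂μ‖ₑ ≤ ∫⁻ x, ‖f x * a x‖ₑ ∂μ := enorm_integral_le_lintegral_enorm _
    _ = eLpNorm (fun x => f x * a x) 1 (μ.restrict Q) := by
      rw [eLpNorm_one_eq_lintegral_enorm, ← lintegral_indicator hQ]
      refine lintegral_congr fun x => ?_
      by_cases hx : x ∈ Q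
      · rw [indicator_of_mem hx]
      · rw [indicator_of_notMem hx, hsupp' x hx, enorm_zero]
    _ ≤ eLpNorm f s (μ.restrict Q) * eLpNorm a r (μ.restrict Q) :=
      eLpNorm_smul_le_mul_eLpNorm (p := s) (q := r) (r := 1) (f := a) (φ := f) ha.restrict
        hf.restrict
    _ ≤ eLpNorm f s (μ.restrict Q) * eLpNorm a r μ := by
      gcongr
      exact Measure.restrict_le_self

theorem integrable_mul_of_eLpNorm_restrict_lt_top (hsupp : ∀ x ∉ Q, a x = 0)
    (hf : AEStronglyMeasurable f μ) (ha : AEStronglyMeasurable a μ)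
    (hfQ : eLpNorm f s (μ.restrict Q) < ∞) (har : eLpNorm a r μ < ∞) :
    Integrable (fun x => f x * a x) μ := by
  have hQa : MemLp (fun x => f x * a x) 1 (μ.restrict Q) :=
    MemLp.mul' ⟨ha.restrict, (eLpNorm_mono_measure a Measure.restrict_le_self).trans_lt har⟩
      ⟨hf.restrict, hfQ⟩
  refine (integrableOn_iff_integrable_of_support_subset fun x hx => ?_).mp
    (memLp_one_iff_integrable.mp hQa)
  by_contra hxQ
  exact hx (by simp [hsupp x hxQ])

theorem rpow_mul_enorm_integral_mul_le {q : ℝ} (hQ : MeasurableSet Q) (hQ0 : μ Q ≠ 0)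
    (hQtop : μ Q ≠ ∞) (hsupp : ∀ x ∉ Q, a x = 0) (hf : AEStronglyMeasurable f μ)
    (ha : AEStronglyMeasurable a μ) (hsize : eLpNorm a r μ ≤ μ Q ^ (1 / r.toReal - 1 / q)) :
    μ Q ^ (1 / q) * ‖∫ x, f x * a x ∂μ‖ₑ ≤ μ Q ^ (1 / r.toReal) * eLpNorm f s (μ.restrict Q) :=
  calc μ Q ^ (1 / q) * ‖∫ x, f x * a x ∂μ‖ₑ
      ≤ μ Q ^ (1 / q) * (eLpNorm f s (μ.restrict Q) * μ Q ^ (1 / r.toReal - 1 / q)) := by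
        gcongr
        exact (enorm_integral_mul_le_eLpNorm_restrict_mul hQ hsupp hf ha).trans (by gcongr)
    _ = μ Q ^ (1 / r.toReal) * eLpNorm f s (μ.restrict Q) := by
        rw [mul_left_comm, ← ENNReal.rpow_add _ _ hQ0 hQtop, add_sub_cancel, mul_comm]

end Holder

theorem eLpNorm_restrict_lt_top_of_continuous {X E : Type*} [TopologicalSpace X]
    [MeasurableSpace X] [NormedAddCommGroup E] {μ : Measure X} {Q : Set X} {f : X → E}
    (p : ℝ≥0∞) (hf : Continuous f) (hQc : IsCompact Q) (hQ : MeasurableSet Q) (hQtop : μ Q ≠ ∞) :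
    eLpNorm f p (μ.restrict Q) < ∞ := by
  obtain ⟨C, hC⟩ := hQc.exists_bound_of_continuousOn hf.continuousOn
  refine (eLpNorm_le_of_ae_bound ((ae_restrict_iff' hQ).mpr (.of_forall hC))).trans_lt ?_
  rw [Measure.restrict_apply_univ]
  finiteness

theorem holderConjugate_ofReal_of_one_div_add {r : ℝ≥0∞} {r' : ℝ} (hr : 1 < r)
    (hrr' : 1 / r.toReal + 1 / r' = 1) : 0 < r' ∧ (ENNReal.ofReal r').HolderConjugate r := by
  have hr'pos : 0 < r' := by
    rcases eq_or_ne r ∞ with rfl | hrtop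
    · norm_num at hrr'
      linarith
    · have h1 : 1 < r.toReal := by simpa using ENNReal.toReal_strict_mono hrtop hr
      have h2 : 1 / r.toReal < 1 := (div_lt_one (by linarith)).mpr h1
      exact one_div_pos.mp (by linarith)
  have hrinv : r⁻¹ = ENNReal.ofReal (1 / r.toReal) := by
    rw [one_div, ← ENNReal.toReal_inv, ENNReal.ofReal_toReal (inv_ne_top.mpr (by positivity))]
  refine ⟨hr'pos, ENNReal.holderConjugate_iff.mpr ?_⟩
  rw [← ENNReal.ofReal_inv_of_pos hr'pos, hrinv, ← ENNReal.ofReal_add (by positivity)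
    (by positivity), inv_eq_one_div, add_comm, hrr', ENNReal.ofReal_one]

theorem le_sInf_mul_of_forall_le_mul {S : Set ℝ≥0∞} {x L : ℝ≥0∞} (hS : S.Nonempty)
    (hL : L ≠ ∞) (h : ∀ C ∈ S, x ≤ C * L) : x ≤ sInf S * L := by
  rw [sInf_eq_iInf', ENNReal.iInf_mul' (fun h => absurd h hL) fun _ => hS.to_subtype]
  exact le_iInf fun C => h C C.2

section Cube

variable {d : ℕ}

theorem cube_eq_preimage_Icc (c : Ed d) (ℓ : ℝ) :
    cube d c ℓ = EuclideanSpace.equiv (Fin d) ℝ ⁻¹'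
      Icc (fun i => c i - ℓ / 2) (fun i => c i + ℓ / 2) := by
  ext x
  simp only [cube, mem_preimage, mem_Icc, Pi.le_def, abs_le, ← forall_and]
  refine forall_congr' fun i => ?_
  simp [neg_le_sub_iff_le_add, add_comm]

theorem isCompact_cube (c : Ed d) (ℓ : ℝ) : IsCompact (cube d c ℓ) := by
  rw [cube_eq_preimage_Icc]
  exact (EuclideanSpace.equiv (Fin d) ℝ).toHomeomorph.isCompact_preimage.mpr isCompact_Icc

theorem measurableSet_cube (c : Ed d) (ℓ : ℝ) : MeasurableSet (cube d c ℓ) :=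
  (isCompact_cube c ℓ).isClosed.measurableSet

theorem ball_subset_cube (c : Ed d) (ℓ : ℝ) : Metric.ball c (ℓ / 2) ⊆ cube d c ℓ :=
  fun x hx i => calc |x i - c i| = ‖(x - c) i‖ := rfl
    _ ≤ ‖x - c‖ := PiLp.norm_apply_le _ i
    _ ≤ ℓ / 2 := (mem_ball_iff_norm.mp hx).le

theorem volume_cube_pos (c : Ed d) {ℓ : ℝ} (hℓ : 0 < ℓ) : 0 < volume (cube d c ℓ) :=
  (Metric.measure_ball_pos volume c (half_pos hℓ)).trans_le (measure_mono (ball_subset_cube c ℓ))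

end Cube

theorem continuous_of_mem_polySpace {d δ : ℕ} {P : Ed d → ℂ} (hP : P ∈ polySpace d δ) :
    Continuous P := by
  obtain ⟨p, -, hp⟩ := hP
  rw [funext hp]
  exact MvPolynomial.continuous_eval p |>.comp <| continuous_pi fun i =>
    Complex.continuous_ofReal.comp (EuclideanSpace.proj i).continuous

theorem polyProj_mem_polySpace (d δ : ℕ) (Q : Set (Ed d)) (f : Ed d → ℂ) :
    polyProj d δ Q f ∈ polySpace d δ := by
  unfold polyProj
  split_ifs with h
  · exact h.choose_spec.1
  · exact ⟨0, by simp, by simp⟩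

theorem integral_mul_eq_zero_of_mem_polySpace {d δ : ℕ} {P a : Ed d → ℂ}
    (hP : P ∈ polySpace d δ)
    (hint : ∀ f : Ed d → ℂ, Continuous f → Integrable (fun x => f x * a x))
    (hmom : ∀ β : Fin d → ℕ, ∑ i, β i ≤ δ → ∫ x, (∏ i, (x i : ℂ) ^ β i) * a x = 0) :
    ∫ x, P x * a x = 0 := by
  obtain ⟨p, hpδ, hp⟩ := hP
  have hmono : ∀ m : Fin d →₀ ℕ, Continuous fun x : Ed d => ∏ i, (x i : ℂ) ^ m i :=
    fun m => continuous_finsetProd _ fun i _ =>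
      (Complex.continuous_ofReal.comp (EuclideanSpace.proj i).continuous).pow _
  calc ∫ x, P x * a x
      = ∫ x, ∑ m ∈ p.support, p.coeff m * ((∏ i, (x i : ℂ) ^ m i) * a x) := by
        refine integral_congr_ae (.of_forall fun x => ?_)
        simp only [hp x, MvPolynomial.eval_eq', Finset.sum_mul, mul_assoc]
    _ = ∑ m ∈ p.support, p.coeff m * ∫ x, (∏ i, (x i : ℂ) ^ m i) * a x := by
        rw [integral_finsetSum _ fun m _ => (hint _ (hmono m)).const_mul _]
        simp only [integral_const_mul]
    _ = 0 := Finset.sum_eq_zero fun m hm => by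
        have hdeg : ∑ i, m i ≤ δ := by
          rw [← Finsupp.sum_fintype m (fun _ e => e) fun _ => rfl]
          exact (MvPolynomial.le_totalDegree hm).trans hpδ
        rw [hmom m hdeg, mul_zero]

theorem IsLocalHAtom.rpow_mul_enorm_integral_le {d δ : ℕ} {q r' ℓ : ℝ} {r : ℝ≥0∞}
    {c : Ed d} {g a : Ed d → ℂ} (hr : 1 < r) (hrr' : 1 / r.toReal + 1 / r' = 1) (hℓ : 0 < ℓ)
    (hg : memLocLr d r' g) (ham : AEStronglyMeasurable a volume)
    (ha : IsLocalHAtom d q r δ a (cube d c ℓ)) :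
    volume (cube d c ℓ) ^ (1 / q) * ‖∫ x, g x * a x‖ₑ ≤
      if volume (cube d c ℓ) < 1 then oscTerm d δ r' g (cube d c ℓ)
      else intTerm d r' g (cube d c ℓ) := by
  obtain ⟨hsupp, hsize, hmom⟩ := ha
  obtain ⟨hr'pos, hconj⟩ := holderConjugate_ofReal_of_one_div_add hr hrr'
  set Q := cube d c ℓ
  have hQ : MeasurableSet Q := measurableSet_cube c ℓ
  have hQ0 : volume Q ≠ 0 := (volume_cube_pos c hℓ).ne'
  have hQtop : volume Q ≠ ∞ := (isCompact_cube c ℓ).measure_lt_top.ne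
  have hnorm (f : Ed d → ℂ) : (∫⁻ x in Q, (‖f x‖₊ : ℝ≥0∞) ^ r') ^ (1 / r') =
      eLpNorm f (ENNReal.ofReal r') (volume.restrict Q) := by
    rw [eLpNorm_eq_lintegral_rpow_enorm_toReal (by simpa using hr'pos) ofReal_ne_top,
      toReal_ofReal hr'pos.le]
    rfl
  have hbound (f : Ed d → ℂ) (hf : AEStronglyMeasurable f volume) :
      volume Q ^ (1 / q) * ‖∫ x, f x * a x‖ₑ ≤
        volume Q ^ (1 - 1 / r') * (∫⁻ x in Q, (‖f x‖₊ : ℝ≥0∞) ^ r') ^ (1 / r') := by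
    rw [hnorm, ← show 1 / r.toReal = 1 - 1 / r' by linarith]
    exact rpow_mul_enorm_integral_mul_le hQ hQ0 hQtop hsupp hf ham hsize
  split_ifs with hsmall
  · have hP := polyProj_mem_polySpace d δ Q g
    have hint (f : Ed d → ℂ) (hf : AEStronglyMeasurable f volume)
        (hfQ : eLpNorm f (ENNReal.ofReal r') (volume.restrict Q) < ∞) :
        Integrable (fun x => f x * a x) :=
      integrable_mul_of_eLpNorm_restrict_lt_top hsupp hf ham hfQ
        (hsize.trans_lt (rpow_ne_top_of_ne_zero hQ0 hQtop).lt_top)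
    have hcont (f : Ed d → ℂ) (hf : Continuous f) : Integrable (fun x => f x * a x) :=
      hint f hf.aestronglyMeasurable
        (eLpNorm_restrict_lt_top_of_continuous _ hf (isCompact_cube c ℓ) hQ hQtop)
    have hgQ : eLpNorm g (ENNReal.ofReal r') (volume.restrict Q) < ∞ := by
      rw [← hnorm]
      exact rpow_lt_top_of_nonneg (by positivity) (hg.2 c ℓ hℓ)
    have hsub : ∫ x, g x * a x = ∫ x, (g x - polyProj d δ Q g x) * a x := by
      simp_rw [sub_mul]
      rw [integral_sub (hint g hg.1 hgQ) (hcont _ (continuous_of_mem_polySpace hP)),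
        integral_mul_eq_zero_of_mem_polySpace hP hcont (hmom hsmall), sub_zero]
    rw [hsub]
    exact hbound _ (hg.1.sub (continuous_of_mem_polySpace hP).aestronglyMeasurable)
  · exact hbound g hg.1

theorem tsum_rpow_mul_enorm_integral_le_OfunLoc {d δ : ℕ} {q r' K C0 : ℝ} {r : ℝ≥0∞}
    {Ω : Set (Ed d)} {g : Ed d → ℂ} (F : CubeFamily d K Ω) (hC0 : 0 < C0) (hr : 1 < r)
    (hrr' : 1 / r.toReal + 1 / r' = 1) (hg : memLocLr d r' g) (a : ℕ → Ed d → ℂ)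
    (ham : ∀ n, AEStronglyMeasurable (a n) volume)
    (ha : ∀ n, IsLocalHAtom d q r δ (a n) (cube d (F.center n) (C0 * F.side n))) :
    ∑' n, volume (cube d (F.center n) (C0 * F.side n)) ^ (1 / q) * ‖∫ x, g x * a n x‖ₑ ≤
      OfunLoc d δ K C0 r' g Ω :=
  (ENNReal.tsum_le_tsum fun n => (ha n).rpow_mul_enorm_integral_le hr hrr'
    (mul_pos hC0 (F.side_pos n)) hg (ham n)).trans (le_iSup_of_le F le_rfl)

theorem stmt_18_general (d δ : ℕ) (q p η r' K C0 : ℝ) (r : ℝ≥0∞)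
    (hη : 0 < η)
    (hr : 1 < r) (hrr' : 1 / r.toReal + 1 / r' = 1)
    (hC0 : 1 < C0)
    (g : Ed d → ℂ) (hgl : memLocLr d r' g)
    (hg : ∃ C ∈ ONormSetLoc d δ K C0 q p η r' g, C ≠ ∞)
    (Ω : ℤ → Set (Ed d)) (hΩo : ∀ j, IsOpen (Ω j)) (hΩp : ∀ j, Ω j ≠ univ)
    (hfin : layerNorm d q p η Ω ≠ ∞)
    (cs : ℤ → ℕ → Ed d) (ls : ℤ → ℕ → ℝ)
    (hls : ∀ j k, 0 < ls j k)
    (hsub : ∀ j k, cube d (cs j k) (ls j k) ⊆ Ω j)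
    (hover : ∀ j x,
      (∑' k, (cube d (cs j k) (ls j k)).indicator (fun _ => (1 : ℝ≥0∞)) x) ≤ ENNReal.ofReal K)
    (a : ℤ → ℕ → Ed d → ℂ) (hameas : ∀ j k, AEStronglyMeasurable (a j k) volume)
    (hatom : ∀ j k, IsLocalHAtom d q r δ (a j k) (cube d (cs j k) (C0 * ls j k))) :
    (∑' (j : ℤ) (k : ℕ), (2 : ℝ≥0∞) ^ (j : ℝ) *
        volume (cube d (cs j k) (C0 * ls j k)) ^ (1 / q) *
        (‖∫ x, g x * a j k x‖₊ : ℝ≥0∞)) ≤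
      2 * sInf (ONormSetLoc d δ K C0 q p η r' g) * layerNorm d q p η Ω ^ (1 / η) := by
  obtain ⟨C, hC, -⟩ := hg
  have hL : layerNorm d q p η Ω ^ (1 / η) ≠ ∞ := rpow_ne_top_of_nonneg (by positivity) hfin
  refine (le_sInf_mul_of_forall_le_mul ⟨C, hC⟩ hL fun C' hC' => ?_).trans ?_
  · calc _ = ∑' j : ℤ, (2 : ℝ≥0∞) ^ (j : ℝ) *
            ∑' k, volume (cube d (cs j k) (C0 * ls j k)) ^ (1 / q) * ‖∫ x, g x * a j k x‖ₑ := by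
          simp_rw [mul_assoc, ENNReal.tsum_mul_left]
          rfl
      _ ≤ ∑' j : ℤ, (2 : ℝ≥0∞) ^ (j : ℝ) * OfunLoc d δ K C0 r' g (Ω j) :=
          ENNReal.tsum_le_tsum fun j => by
            gcongr
            exact tsum_rpow_mul_enorm_integral_le_OfunLoc ⟨cs j, ls j, hls j, hsub j, hover j⟩
              (by linarith) hr hrr' hgl (a j) (hameas j) (hatom j)
      _ ≤ C' * layerNorm d q p η Ω ^ (1 / η) := hC' Ω hΩo hΩp hfin
  · rw [mul_assoc]
    exact le_mul_of_one_le_left' one_le_two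

/-- local atomic pairing estimate against `𝓛^{(q,p,η)loc}_{r',φ₁,δ}`:
`∑_{j,k} 2^j |Q̃^{j,k}|^{1/q} |∫ g a_{j,k}| ≤ 2 ‖g‖ ⬝ ‖∑_j 2^{jη} χ_{Ω^j}‖_{q/η,p/η}^{1/η}`. -/
theorem stmt_18 (d δ : ℕ) (q p η r' K C0 : ℝ) (r : ℝ≥0∞)
    (hq0 : 0 < q) (hq1 : q ≤ 1) (hp0 : 0 < p) (hη : 0 < η)
    (hr : 1 < r) (hrr' : 1 / r.toReal + 1 / r' = 1)
    (hδ : Int.floor ((d : ℝ) * (1 / q - 1)) ≤ (δ : ℤ))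
    (hK : 1 ≤ K) (hC0 : 1 < C0)
    (g : Ed d → ℂ) (hgl : memLocLr d r' g)
    (hg : ∃ C ∈ ONormSetLoc d δ K C0 q p η r' g, C ≠ ∞)
    (Ω : ℤ → Set (Ed d)) (hΩo : ∀ j, IsOpen (Ω j)) (hΩp : ∀ j, Ω j ≠ univ)
    (hfin : layerNorm d q p η Ω ≠ ∞)
    (cs : ℤ → ℕ → Ed d) (ls : ℤ → ℕ → ℝ)
    (hls : ∀ j k, 0 < ls j k)
    (hsub : ∀ j k, cube d (cs j k) (ls j k) ⊆ Ω j)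
    (hover : ∀ j x,
      (∑' k, (cube d (cs j k) (ls j k)).indicator (fun _ => (1 : ℝ≥0∞)) x) ≤ ENNReal.ofReal K)
    (a : ℤ → ℕ → Ed d → ℂ) (hameas : ∀ j k, AEStronglyMeasurable (a j k) volume)
    (hatom : ∀ j k, IsLocalHAtom d q r δ (a j k) (cube d (cs j k) (C0 * ls j k))) :
    (∑' (j : ℤ) (k : ℕ), (2 : ℝ≥0∞) ^ (j : ℝ) *
        volume (cube d (cs j k) (C0 * ls j k)) ^ (1 / q) *
        (‖∫ x, g x * a j k x‖₊ : ℝ≥0∞)) ≤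
      2 * sInf (ONormSetLoc d δ K C0 q p η r' g) * layerNorm d q p η Ω ^ (1 / η) :=
  stmt_18_general d δ q p η r' K C0 r hη hr hrr' hC0 g hgl hg Ω hΩo hΩp hfin cs ls hls hsub hover a
    hameas hatom

end HA
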